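/- There exists a constant δ > 0 such that for every ξ ∈ Λ and every index i = 1,…,1+d_c one has 0 < ξ^i and ξ^i + 1/ξ^i ≤ δ; that is, the components of elements of Λ are uniformly bounded away from 0 and from infinity. -/

import Mathlib

/-!
Testing `ξ ∈ K*` against the exchange vector that pays `1 + λ^{ij}` units of asset `i` for one
unit of asset `j` gives `ξ^j ≤ (1 + λ^{ij}) ξ^i`. With `ξ^1 = 1` this traps every `ξ^i` between
`1 / (1 + λ^{i1})` and `1 + λ^{1i}`, and finitely many coefficients are bounded.
-/

/-- The solvency cone `K` of Kabanov. -/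
def solvencyCone (dc : ℕ) (lam : Fin (dc+1) → Fin (dc+1) → ℝ) : Set (Fin (dc+1) → ℝ) :=
  {x | ∃ a : Fin (dc+1) → Fin (dc+1) → ℝ, (∀ i j, 0 ≤ a i j) ∧
    ∀ i, 0 ≤ x i + ∑ j, (a j i - (1 + lam i j) * a i j)}

/-- The positive polar cone `K*` of the solvency cone. -/
def polarCone (dc : ℕ) (lam : Fin (dc+1) → Fin (dc+1) → ℝ) : Set (Fin (dc+1) → ℝ) :=
  {ξ | ∀ x ∈ solvencyCone dc lam, 0 ≤ ∑ i, ξ i * x i}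

/-- The section `Λ = {ξ ∈ K* : ξ^1 = 1}`. -/
def lambdaSection (dc : ℕ) (lam : Fin (dc+1) → Fin (dc+1) → ℝ) : Set (Fin (dc+1) → ℝ) :=
  {ξ ∈ polarCone dc lam | ξ 0 = 1}

section SolvencyCone

variable {dc : ℕ} {lam : Fin (dc+1) → Fin (dc+1) → ℝ}

lemma mem_solvencyCone_of_nonneg {x : Fin (dc+1) → ℝ} (hx : 0 ≤ x) :
    x ∈ solvencyCone dc lam :=
  ⟨0, fun _ _ => le_rfl, fun i => by simpa using hx i⟩

lemma exchange_mem_solvencyCone {i j : Fin (dc+1)} (hij : i ≠ j) :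
    Pi.single i (1 + lam i j) - Pi.single j 1 ∈ solvencyCone dc lam := by
  refine ⟨fun k l => if k = i ∧ l = j then 1 else 0, fun k l => by positivity, fun m => ?_⟩
  rcases eq_or_ne m i with rfl | hmi
  · simp [hij]
  · rcases eq_or_ne m j with rfl | hmj <;> simp [*]

lemma polarCone_iff_dotProduct {ξ : Fin (dc+1) → ℝ} :
    ξ ∈ polarCone dc lam ↔ ∀ x ∈ solvencyCone dc lam, 0 ≤ ξ ⬝ᵥ x :=
  Iff.rfl

lemma nonneg_of_mem_polarCone {ξ : Fin (dc+1) → ℝ} (hξ : ξ ∈ polarCone dc lam)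
    (i : Fin (dc+1)) : 0 ≤ ξ i := by
  simpa using polarCone_iff_dotProduct.mp hξ _
    (mem_solvencyCone_of_nonneg (Pi.single_nonneg.mpr zero_le_one : 0 ≤ Pi.single i 1))

lemma le_mul_of_mem_polarCone {ξ : Fin (dc+1) → ℝ} (hξ : ξ ∈ polarCone dc lam)
    {i j : Fin (dc+1)} (hij : i ≠ j) : ξ j ≤ (1 + lam i j) * ξ i := by
  have := polarCone_iff_dotProduct.mp hξ _ (exchange_mem_solvencyCone hij)
  rw [dotProduct_sub, dotProduct_single, dotProduct_single] at this
  linarith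

lemma mem_lambdaSection_bounds {C : ℝ} (hC : 0 ≤ C) (hlamC : ∀ k l, lam k l ≤ C)
    {ξ : Fin (dc+1) → ℝ} (hξ : ξ ∈ lambdaSection dc lam) (i : Fin (dc+1)) :
    0 < ξ i ∧ ξ i + 1 / ξ i ≤ 2 + 2 * C := by
  obtain ⟨hpolar, hξ0⟩ := hξ
  rcases eq_or_ne i 0 with rfl | hi
  · rw [hξ0]
    constructor <;> linarith
  have hupper : ξ i ≤ 1 + lam 0 i := by
    simpa [hξ0] using le_mul_of_mem_polarCone hpolar hi.symm
  have hlower : 1 ≤ (1 + lam i 0) * ξ i := by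
    simpa [hξ0] using le_mul_of_mem_polarCone hpolar hi
  have hpos : 0 < ξ i := by
    refine (nonneg_of_mem_polarCone hpolar i).lt_of_ne fun h => ?_
    rw [← h, mul_zero] at hlower
    linarith
  have hinv : 1 / ξ i ≤ 1 + lam i 0 := by
    rw [div_le_iff₀ hpos]
    linarith
  exact ⟨hpos, by linarith [hlamC 0 i, hlamC i 0]⟩

end SolvencyCone

theorem lambdaSection_uniform_bounds_general (dc : ℕ)
    (lam : Fin (dc+1) → Fin (dc+1) → ℝ) :
    ∃ δ : ℝ, 0 < δ ∧
      ∀ ξ ∈ lambdaSection dc lam, ∀ i, 0 < ξ i ∧ ξ i + 1 / ξ i ≤ δ := by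
  obtain ⟨M, hM⟩ := Finite.exists_le (Function.uncurry lam)
  have hlamC : ∀ k l, lam k l ≤ max M 0 := fun k l => (hM (k, l)).trans (le_max_left M 0)
  exact ⟨2 + 2 * max M 0, by positivity, fun ξ hξ i =>
    mem_lambdaSection_bounds (le_max_right M 0) hlamC hξ i⟩

/-- Under `(Hλ)`, the components of elements of `Λ` are uniformly bounded away
from `0` and `∞`: there is `δ > 0` with `0 < ξ^i` and `ξ^i + 1/ξ^i ≤ δ`
for every `ξ ∈ Λ` and every `i`. -/
theorem lambdaSection_uniform_bounds (dc : ℕ) (hdc : 1 ≤ dc)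
    (lam : Fin (dc+1) → Fin (dc+1) → ℝ) (hlam : ∀ i j, 0 ≤ lam i j)
    (hHlam : ∀ i j, i ≠ j → 0 < lam i j + lam j i) :
    ∃ δ : ℝ, 0 < δ ∧
      ∀ ξ ∈ lambdaSection dc lam, ∀ i, 0 < ξ i ∧ ξ i + 1 / ξ i ≤ δ :=
  lambdaSection_uniform_bounds_general dc lam
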